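/- Let ũ_n(z) = ₚF_q(α₁+n, α₂,...,αₚ; γ₁,...,γ_q; z) and u_k(z) = z^k (d^k/dz^k) ₚF_q(α₁,...,αₚ; γ₁,...,γ_q; z). Then ũ_n(z) = Σ_{k=0}^n [C(n,k)/(α₁)_k] u_k(z), where C(n,k) is the binomial coefficient and (α₁)_k the Pochhammer symbol, provided α₁ is not a nonpositive integer. -/

import Mathlib

/-!
Comparing coefficients of `z^m` and cancelling the common factor
`(α₂)_m ⋯ (α_p)_m / ((γ₁)_m ⋯ (γ_q)_m m!)`, the `k`-th term on the right contributes
`C(n,k) m(m-1)⋯(m-k+1) (α₁+k)_{m-k}`, because `(α₁)_m = (α₁)_k (α₁+k)_{m-k}`. So the claim is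
`(a+n)_m = Σ_k C(n,k) m(m-1)⋯(m-k+1) (a+k)_{m-k}`. As `(a)_m` is the falling factorial of
length `m` at `a+m-1`, this is the Chu–Vandermonde identity for the falling factorial at
`n + (a+m-1)`, combined with `C(m,k) n(n-1)⋯(n-k+1) = C(n,k) m(m-1)⋯(m-k+1)`.
-/

open PowerSeries Finset

/-- The Pochhammer symbol `(a)_k = a(a+1)⋯(a+k-1)`. -/
noncomputable def poch (a : ℂ) (k : ℕ) : ℂ := (ascPochhammer ℂ k).eval a

/-- The `k`-th Maclaurin coefficient of `ₚF_q(α; γ; z)`. -/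
noncomputable def hypCoeff {p q : ℕ} (α : Fin p → ℂ) (γ : Fin q → ℂ) (k : ℕ) : ℂ :=
  (∏ i, poch (α i) k) / ((∏ j, poch (γ j) k) * (k.factorial : ℂ))

/-- The generalized hypergeometric series `ₚF_q(α; γ; z)` as a formal power series. -/
noncomputable def hypSeries {p q : ℕ} (α : Fin p → ℂ) (γ : Fin q → ℂ) : PowerSeries ℂ :=
  PowerSeries.mk (hypCoeff α γ)

/-- `u_k(z) = z^k (d^k/dz^k) ₚF_q(α; γ; z)` as a formal power series. -/
noncomputable def hypU {p q : ℕ} (α : Fin p → ℂ) (γ : Fin q → ℂ) (k : ℕ) : PowerSeries ℂ :=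
  X ^ k * (fun f => derivative ℂ f)^[k] (hypSeries α γ)

lemma poch_ne_zero {a : ℂ} (ha : ∀ m : ℕ, a ≠ -(m : ℂ)) (k : ℕ) : poch a k ≠ 0 := by
  rw [poch, Ne, ascPochhammer_eval_eq_zero_iff]
  rintro ⟨m, -, hm⟩
  exact ha m (by rw [hm, neg_neg])

lemma poch_add (a : ℂ) (k t : ℕ) : poch a (k + t) = poch a k * poch (a + k) t := by
  simpa [poch, Polynomial.eval_comp, add_comm] using
    congrArg (Polynomial.eval a) (ascPochhammer_mul ℂ k t).symm

lemma poch_eq_descPochhammer_smeval (a : ℂ) (m : ℕ) :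
    poch a m = (descPochhammer ℤ m).smeval (a + m - 1) := by
  rw [Polynomial.descPochhammer_smeval_eq_ascPochhammer, Polynomial.ascPochhammer_smeval_eq_eval,
    poch]
  ring_nf

theorem PowerSeries.coeff_X_pow_mul_iterate_derivative {R : Type*} [CommSemiring R] (f : R⟦X⟧) (k m : ℕ) :
    coeff m (X ^ k * (d⁄dX R)^[k] f) = m.descFactorial k * coeff m f := by
  rw [coeff_X_pow_mul']
  split_ifs with hkm
  · obtain ⟨j, rfl⟩ := Nat.exists_eq_add_of_le' hkm
    rw [coeff_iterate_derivative, Nat.add_sub_cancel, Nat.add_descFactorial_eq_ascFactorial]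
  · simp [Nat.descFactorial_eq_zero_iff_lt.mpr (not_le.mp hkm)]

theorem Nat.choose_mul_descFactorial_comm (m n i : ℕ) :
    m.choose i * n.descFactorial i = n.choose i * m.descFactorial i := by
  rw [Nat.descFactorial_eq_factorial_mul_choose, Nat.descFactorial_eq_factorial_mul_choose]
  ring

lemma poch_add_natCast_eq_sum_range_succ (a : ℂ) (n m : ℕ) :
    poch (a + n) m = ∑ k ∈ range (m + 1),
      (n.choose k : ℂ) * m.descFactorial k * poch (a + k) (m - k) := by
  have hsplit : a + n + m - 1 = n + (a + m - 1) := by ring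
  rw [poch_eq_descPochhammer_smeval, hsplit,
    Ring.descPochhammer_smeval_add _ (Commute.all _ _), Nat.sum_antidiagonal_eq_sum_range_succ_mk]
  refine sum_congr rfl fun k hk => ?_
  have hkm : k + (m - k) = m := Nat.add_sub_of_le (Nat.lt_succ_iff.mp (mem_range.mp hk))
  have hshift : a + m - 1 = a + k + (m - k : ℕ) - 1 := by
    rw [add_assoc a, ← Nat.cast_add, hkm]
  rw [Polynomial.descPochhammer_smeval_eq_descFactorial, hshift, ← poch_eq_descPochhammer_smeval,
    ← mul_assoc, ← Nat.cast_mul, Nat.choose_mul_descFactorial_comm, Nat.cast_mul]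

lemma poch_add_natCast_eq_sum (a : ℂ) (n m : ℕ) :
    poch (a + n) m = ∑ k ∈ range (n + 1),
      (n.choose k : ℂ) * m.descFactorial k * poch (a + k) (m - k) := by
  set f : ℕ → ℂ := fun k => (n.choose k : ℂ) * m.descFactorial k * poch (a + k) (m - k)
  have hf : ∀ k, n < k ∨ m < k → f k = 0 := by
    rintro k (hk | hk) <;> simp [f, Nat.choose_eq_zero_of_lt, Nat.descFactorial_eq_zero_iff_lt, hk]
  calc poch (a + n) m = ∑ k ∈ range (m + 1), f k := poch_add_natCast_eq_sum_range_succ a n m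
    _ = ∑ k ∈ range (n + m + 1), f k :=
      sum_subset (range_subset_range.mpr (by omega)) fun k _ hkm =>
        hf k (.inr (by simpa using hkm))
    _ = ∑ k ∈ range (n + 1), f k :=
      (sum_subset (range_subset_range.mpr (by omega)) fun k _ hkn =>
        hf k (.inl (by simpa using hkn))).symm

lemma hypCoeff_eq_poch_mul_hypCoeff_tail {p q : ℕ} (α : Fin (p + 1) → ℂ) (γ : Fin q → ℂ)
    (m : ℕ) : hypCoeff α γ m = poch (α 0) m * hypCoeff (Fin.tail α) γ m := by
  rw [hypCoeff, hypCoeff, Fin.prod_univ_succ, mul_div_assoc]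
  rfl

lemma coeff_hypSeries {p q : ℕ} (α : Fin p → ℂ) (γ : Fin q → ℂ) (m : ℕ) :
    coeff m (hypSeries α γ) = hypCoeff α γ m :=
  coeff_mk _ _

lemma coeff_hypU {p q : ℕ} (α : Fin p → ℂ) (γ : Fin q → ℂ) (k m : ℕ) :
    coeff m (hypU α γ k) = m.descFactorial k * hypCoeff α γ m := by
  rw [hypU, ← coeff_hypSeries]
  exact coeff_X_pow_mul_iterate_derivative _ k m

lemma div_poch_mul_descFactorial_mul_poch {a : ℂ} {k : ℕ} (ha : poch a k ≠ 0) (c : ℂ)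
    (m : ℕ) : c / poch a k * (m.descFactorial k * poch a m) =
      c * m.descFactorial k * poch (a + k) (m - k) := by
  rcases le_or_gt k m with hkm | hmk
  · rw [← Nat.add_sub_of_le hkm, poch_add, Nat.add_sub_cancel_left]
    field_simp
  · simp [Nat.descFactorial_eq_zero_iff_lt.mpr hmk]

theorem hyp_shifted_eq_sum_hypU_general (p q n : ℕ) (α : Fin (p + 1) → ℂ) (γ : Fin q → ℂ)
    (hα : ∀ m : ℕ, α 0 ≠ -(m : ℂ)) :
    hypSeries (Function.update α 0 (α 0 + (n : ℂ))) γ =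
      ∑ k ∈ Finset.range (n + 1), ((n.choose k : ℂ) / poch (α 0) k) • hypU α γ k := by
  ext m
  rw [map_sum, coeff_hypSeries, hypCoeff_eq_poch_mul_hypCoeff_tail, Fin.tail_update_zero,
    Function.update_self, poch_add_natCast_eq_sum, sum_mul]
  refine sum_congr rfl fun k _ => ?_
  rw [coeff_smul, coeff_hypU, hypCoeff_eq_poch_mul_hypCoeff_tail, smul_eq_mul,
    ← mul_assoc _ (poch _ _), ← mul_assoc, div_poch_mul_descFactorial_mul_poch (poch_ne_zero hα k)]

/-- With `ũ_n(z) = ₚF_q(α₁+n, α₂,…,αₚ; γ; z)` and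
`u_k(z) = z^k (d^k/dz^k) ₚF_q(α; γ; z)`, one has
`ũ_n = Σ_{k=0}^n [C(n,k)/(α₁)_k] u_k`, provided `α₁` is not a nonpositive integer. -/
theorem hyp_shifted_eq_sum_hypU (p q n : ℕ) (α : Fin (p + 1) → ℂ) (γ : Fin q → ℂ)
    (hα : ∀ m : ℕ, α 0 ≠ -(m : ℂ)) (hγ : ∀ j, ∀ m : ℕ, γ j ≠ -(m : ℂ)) :
    hypSeries (Function.update α 0 (α 0 + (n : ℂ))) γ =
      ∑ k ∈ Finset.range (n + 1), ((n.choose k : ℂ) / poch (α 0) k) • hypU α γ k :=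
  hyp_shifted_eq_sum_hypU_general p q n α γ hα
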